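/- arXiv:0801.2034 — 3 statements merged into one kernel-verified Lean document; each statement's English description precedes it below -/
import Mathlib

section
/- Let Σ be a Hermitian positive definite MN×MN complex matrix with eigenvalues in [λ_min, λ_max], λ_min > 0, and σ² > 0. Then for every x ∈ ℂ^N and every y ∈ ℂ^M, tr[((σ² + λ_min·r)·𝟙_M)⁻¹ · y·yᴴ] ≥ tr[(σ²·𝟙_M + (𝟙_M ⊗ xᴴ)·Σ·(𝟙_M ⊗ x))⁻¹ · y·yᴴ] whenever r ≤ ‖x‖². -/
open Matrix MeasureTheory Filter
open scoped Kronecker ComplexOrder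

/-- A column matrix built from a vector. -/
noncomputable def colMat {N : ℕ} (v : Fin N → ℂ) : Matrix (Fin N) (Fin 1) ℂ :=
  Matrix.of fun i _ => v i

/-- The channel covariance matrix `σ²·1_M + (1_M ⊗ xᴴ)·Σ·(1_M ⊗ x)`. -/
noncomputable def Cmat (M N : ℕ) (σ2 : ℝ) (S : Matrix (Fin M × Fin N) (Fin M × Fin N) ℂ)
    (v : Fin N → ℂ) : Matrix (Fin M × Fin 1) (Fin M × Fin 1) ℂ :=
  (σ2 : ℂ) • 1 + ((1 : Matrix (Fin M) (Fin M) ℂ) ⊗ₖ (colMat v)ᴴ) * S *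
    ((1 : Matrix (Fin M) (Fin M) ℂ) ⊗ₖ colMat v)

/-- Squared Euclidean norm `‖v‖²` of a complex vector. -/
noncomputable def nsq {ι : Type*} [Fintype ι] (v : ι → ℂ) : ℝ := ∑ i, Complex.normSq (v i)

/-- The Rayleigh fading conditional output density
`p(y|x) = exp(-tr[C(x)⁻¹ y yᴴ]) / (π^M det C(x))`. -/
noncomputable def pdens (M N : ℕ) (σ2 : ℝ) (S : Matrix (Fin M × Fin N) (Fin M × Fin N) ℂ)
    (v : Fin N → ℂ) (y : Fin M × Fin 1 → ℂ) : ℝ :=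
  Real.exp (-(Matrix.trace ((Cmat M N σ2 S v)⁻¹ * Matrix.vecMulVec y (star y))).re) /
    (Real.pi ^ M * ((Cmat M N σ2 S v).det).re)
/-! Since `(1 ⊗ x)ᴴ (1 ⊗ x) = ‖x‖² • 1` and `Σ ≥ λ_min • 1` in the Loewner order, the covariance
`C(x)` dominates `(σ² + λ_min r) • 1`. Inversion is antitone on positive definite matrices, and
`tr(A y yᴴ) = yᴴ A y` is monotone in `A`. -/

open scoped MatrixOrder

namespace Matrix

variable {n 𝕜 : Type*} [Fintype n] [RCLike 𝕜]

theorem IsHermitian.smul_one_le_of_le_eigenvalues [DecidableEq n] {A : Matrix n n 𝕜}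
    (hA : A.IsHermitian) {c : ℝ} (h : ∀ i, c ≤ hA.eigenvalues i) : (c : 𝕜) • 1 ≤ A := by
  have hc : ∀ x ∈ spectrum ℝ A, c ≤ x := by
    intro x hx
    obtain ⟨i, rfl⟩ := hA.spectrum_real_eq_range_eigenvalues ▸ hx
    exact h i
  have halg : algebraMap ℝ (Matrix n n 𝕜) c = (c : 𝕜) • 1 := by
    rw [Algebra.algebraMap_eq_smul_one, ← RCLike.algebraMap_eq_ofReal, algebraMap_smul]
  exact halg ▸ algebraMap_le_of_le_spectrum hc hA.isSelfAdjoint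

theorem smul_one_le_conjTranspose_mul_mul {m : Type*} [Fintype m] [DecidableEq m]
    [DecidableEq n] {S : Matrix n n 𝕜} {B : Matrix n m 𝕜} {c t : ℝ} (hS : (c : 𝕜) • 1 ≤ S)
    (hB : Bᴴ * B = (t : 𝕜) • 1) : ((c * t : ℝ) : 𝕜) • 1 ≤ Bᴴ * S * B := by
  rw [le_iff]
  convert (le_iff.mp hS).conjTranspose_mul_mul_same B using 1
  rw [Matrix.mul_sub, Matrix.sub_mul, Matrix.mul_smul, Matrix.smul_mul, Matrix.mul_one, hB,
    smul_smul, RCLike.ofReal_mul]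

theorem re_trace_mul_vecMulVec_mono {A B : Matrix n n 𝕜} (hAB : A ≤ B) (y : n → 𝕜) :
    RCLike.re (A * vecMulVec y (star y)).trace ≤ RCLike.re (B * vecMulVec y (star y)).trace := by
  have h := (le_iff.mp hAB).re_dotProduct_nonneg y
  rw [sub_mulVec, dotProduct_sub, map_sub, sub_nonneg] at h
  simpa only [mul_vecMulVec, trace_vecMulVec, dotProduct_comm _ (star y)] using h

open scoped Matrix.Norms.L2Operator in
theorem PosDef.inv_le_inv_of_le [DecidableEq n] {A B : Matrix n n ℂ} (hA : A.PosDef)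
    (hAB : A ≤ B) : B⁻¹ ≤ A⁻¹ := by
  have hB : B.PosDef := by simpa using hA.add_posSemidef hAB
  simpa [coe_units_inv] using
    CStarAlgebra.inv_le_inv (a := hA.isUnit.unit) (b := hB.isUnit.unit) hA.posSemidef.nonneg hAB

end Matrix

theorem conjTranspose_colMat_mul_colMat {N : ℕ} (v : Fin N → ℂ) :
    (colMat v)ᴴ * colMat v = ((nsq v : ℝ) : ℂ) • 1 := by
  ext i j
  fin_cases i; fin_cases j
  simp [mul_apply, colMat, nsq, Complex.normSq_eq_conj_mul_self]

theorem smul_one_le_Cmat {M N : ℕ} {σ2 lmin r : ℝ}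
    {S : Matrix (Fin M × Fin N) (Fin M × Fin N) ℂ} (hS : S.IsHermitian)
    (hmin : ∀ i, lmin ≤ hS.eigenvalues i) (hlmin : 0 ≤ lmin) {v : Fin N → ℂ} (hrv : r ≤ nsq v) :
    (((σ2 + lmin * r : ℝ) : ℂ) • 1 : Matrix (Fin M × Fin 1) (Fin M × Fin 1) ℂ) ≤
      Cmat M N σ2 S v := by
  have hB : ((1 : Matrix (Fin M) (Fin M) ℂ) ⊗ₖ colMat v)ᴴ *
      ((1 : Matrix (Fin M) (Fin M) ℂ) ⊗ₖ colMat v) = ((nsq v : ℝ) : ℂ) • 1 := by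
    rw [conjTranspose_kronecker, conjTranspose_one, ← mul_kronecker_mul, one_mul,
      conjTranspose_colMat_mul_colMat, kronecker_smul, one_kronecker_one]
  have hSB := smul_one_le_conjTranspose_mul_mul (c := lmin) (t := nsq v)
    (hS.smul_one_le_of_le_eigenvalues hmin) hB
  rw [conjTranspose_kronecker, conjTranspose_one] at hSB
  have hr : ((lmin * r : ℝ) : ℂ) • (1 : Matrix (Fin M × Fin 1) (Fin M × Fin 1) ℂ) ≤
      ((lmin * nsq v : ℝ) : ℂ) • 1 := by
    rw [le_iff, ← sub_smul, ← Complex.ofReal_sub]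
    exact PosSemidef.one.smul
      (by exact_mod_cast sub_nonneg.mpr (mul_le_mul_of_nonneg_left hrv hlmin))
  rw [Cmat, Complex.ofReal_add, add_smul]
  exact add_le_add le_rfl (hr.trans hSB)

theorem trace_inv_yyH_bound_general {M N : ℕ} (σ2 lmin r : ℝ)
    (S : Matrix (Fin M × Fin N) (Fin M × Fin N) ℂ) (hS : S.PosDef)
    (hmin : ∀ i, lmin ≤ hS.1.eigenvalues i)
    (hlmin : 0 < lmin) (hσ : 0 < σ2) (hr : 0 ≤ r)
    (v : Fin N → ℂ) (hrv : r ≤ nsq v) (y : Fin M × Fin 1 → ℂ) :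
    (Matrix.trace ((Cmat M N σ2 S v)⁻¹ * Matrix.vecMulVec y (star y))).re ≤
    (Matrix.trace (((((σ2 + lmin * r : ℝ) : ℂ) •
        (1 : Matrix (Fin M × Fin 1) (Fin M × Fin 1) ℂ))⁻¹) *
      Matrix.vecMulVec y (star y))).re := by
  have hc : (0 : ℂ) < ((σ2 + lmin * r : ℝ) : ℂ) := by exact_mod_cast (by positivity)
  have hpd := (PosDef.one (n := Fin M × Fin 1) (R := ℂ)).smul hc
  exact re_trace_mul_vecMulVec_mono
    (hpd.inv_le_inv_of_le (smul_one_le_Cmat hS.1 hmin hlmin.le hrv)) y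

/-- Whenever `r ≤ ‖x‖²`,
`tr[((σ²+λ_min·r)·1_M)⁻¹ y yᴴ] ≥ tr[(σ²·1_M + (1_M⊗xᴴ)Σ(1_M⊗x))⁻¹ y yᴴ]`. -/
theorem trace_inv_yyH_bound {M N : ℕ} (σ2 lmin lmax r : ℝ)
    (S : Matrix (Fin M × Fin N) (Fin M × Fin N) ℂ) (hS : S.PosDef)
    (hmin : ∀ i, lmin ≤ hS.1.eigenvalues i) (hmax : ∀ i, hS.1.eigenvalues i ≤ lmax)
    (hlmin : 0 < lmin) (hσ : 0 < σ2) (hr : 0 ≤ r)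
    (v : Fin N → ℂ) (hrv : r ≤ nsq v) (y : Fin M × Fin 1 → ℂ) :
    (Matrix.trace ((Cmat M N σ2 S v)⁻¹ * Matrix.vecMulVec y (star y))).re ≤
    (Matrix.trace (((((σ2 + lmin * r : ℝ) : ℂ) •
        (1 : Matrix (Fin M × Fin 1) (Fin M × Fin 1) ℂ))⁻¹) *
      Matrix.vecMulVec y (star y))).re :=
  trace_inv_yyH_bound_general σ2 lmin r S hS hmin hlmin hσ hr v hrv y
end

section
/- Let (W(·|x))_{x∈X} be a channel with input alphabet X and output densities on ℂ^M. Suppose there exist λ > 0, distinct inputs x₁,…,xₙ ∈ X and pairwise disjoint measurable sets B₁,…,Bₙ ⊂ ℂ^M with ∫_{B_i} p(y|x_i) dy ≥ λ for all i. Then for the uniform input measure μₙ = (1/n)·Σᵢ δ_{x_i}, the mutual information satisfies I(μₙ; W) ≥ λ·log n − 1. -/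
open MeasureTheory

/-! Let `F = (1/n) ∑ⱼ p(·|xⱼ)` be the output density of the uniform input, so that
`p(·|xᵢ) ≤ n F`. The Gibbs-type inequality `a log (a / b) ≥ a log c + a - c b` (valid for
every `c > 0`), applied with `c = n` on `Bᵢ` and `c = 1` off `Bᵢ`, gives
`D(p(·|xᵢ) ‖ F) ≥ P_{xᵢ}(Bᵢ) log n - (n - 1) F(Bᵢ)`. Averaging over `i` and using
`∑ᵢ F(Bᵢ) ≤ 1` (the `Bᵢ` are disjoint) yields `I(μₙ; W) ≥ λ log n - (n - 1)/n`. -/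

theorem pos_of_le_mul_of_nonneg {a b c : ℝ} (ha : 0 < a) (hb : 0 ≤ b) (hab : a ≤ c * b) :
    0 < b :=
  hb.lt_of_ne (by rintro rfl; linarith [mul_zero c])

theorem le_mul_one_div_mul_sum {n : ℕ} {a : Fin n → ℝ} (ha : ∀ j, 0 ≤ a j) (i : Fin n) :
    a i ≤ n * ((1 / n : ℝ) * ∑ j, a j) := by
  have hn : (n : ℝ) ≠ 0 := Nat.cast_ne_zero.mpr (Fin.pos i).ne'
  rw [← mul_assoc, mul_one_div_cancel hn, one_mul]
  exact Finset.single_le_sum (fun j _ => ha j) (Finset.mem_univ i)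

namespace Real

theorem mul_log_add_sub_le_mul_log_div {a b c : ℝ} (ha : 0 ≤ a) (hb : 0 ≤ b) (hc : 0 < c)
    (hab : 0 < a → 0 < b) : a * log c + (a - c * b) ≤ a * log (a / b) := by
  rcases ha.eq_or_lt with rfl | ha
  · simpa using mul_nonneg hc.le hb
  have hb := hab ha
  have key : 1 - (a / (c * b))⁻¹ ≤ log (a / (c * b)) :=
    one_sub_inv_le_log_of_pos (by positivity)
  have hsplit : log (a / b) = log c + log (a / (c * b)) := by
    rw [← log_mul hc.ne' (by positivity)]
    congr 1
    field_simp
  have hmul : a * (1 - (a / (c * b))⁻¹) = a - c * b := by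
    field_simp
  rw [hsplit, mul_add, ← hmul]
  gcongr

theorem mul_log_div_le_mul_log {a b c : ℝ} (ha : 0 ≤ a) (hb : 0 ≤ b) (hab : a ≤ c * b) :
    a * log (a / b) ≤ a * log c := by
  rcases ha.eq_or_lt with rfl | ha
  · simp
  have hb := pos_of_le_mul_of_nonneg ha hb hab
  gcongr
  rwa [div_le_iff₀ hb]

end Real

open Real

section

variable {α : Type*} [MeasurableSpace α] {μ : Measure α} {f g : α → ℝ} {c : ℝ}

theorem integrable_mul_log_div (hf : Integrable f μ) (hg : Integrable g μ)
    (hf0 : ∀ y, 0 ≤ f y) (hg0 : ∀ y, 0 ≤ g y) (hfg : ∀ y, f y ≤ c * g y) :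
    Integrable (fun y => f y * log (f y / g y)) μ := by
  have hmeas : AEStronglyMeasurable (fun y => f y * log (f y / g y)) μ :=
    (hf.aemeasurable.mul (measurable_log.comp_aemeasurable
      (hf.aemeasurable.div hg.aemeasurable))).aestronglyMeasurable
  refine Integrable.mono' (g := fun y => |log c| * f y + g y) ((hf.const_mul _).add hg) hmeas
    (.of_forall fun y => ?_)
  have lower := mul_log_add_sub_le_mul_log_div (hf0 y) (hg0 y) one_pos
    (fun h => pos_of_le_mul_of_nonneg h (hg0 y) (hfg y))
  have upper := mul_log_div_le_mul_log (hf0 y) (hg0 y) (hfg y)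
  rw [norm_eq_abs, abs_le]
  constructor
  · simp only [log_one, mul_zero, one_mul, zero_add] at lower
    nlinarith [abs_nonneg (log c), hf0 y]
  · nlinarith [le_abs_self (log c), hf0 y, hg0 y]

theorem setIntegral_mul_log_sub_le_integral_mul_log_div (hf : Integrable f μ)
    (hg : Integrable g μ) (hf0 : ∀ y, 0 ≤ f y) (hg0 : ∀ y, 0 ≤ g y) (hc : 0 < c)
    (hfg : ∀ y, f y ≤ c * g y) {B : Set α} (hB : MeasurableSet B) :
    (∫ y in B, f y ∂μ) * log c - (c - 1) * (∫ y in B, g y ∂μ) +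
        (∫ y, f y ∂μ - ∫ y, g y ∂μ) ≤ ∫ y, f y * log (f y / g y) ∂μ := by
  have hpos : ∀ y, 0 < f y → 0 < g y := fun y h => pos_of_le_mul_of_nonneg h (hg0 y) (hfg y)
  have hin : IntegrableOn (fun y => f y * log c - (c - 1) * g y) B μ :=
    ((hf.mul_const _).sub (hg.const_mul _)).integrableOn
  have hsub : Integrable (fun y => f y - g y) μ := hf.sub hg
  calc (∫ y in B, f y ∂μ) * log c - (c - 1) * (∫ y in B, g y ∂μ) +
        (∫ y, f y ∂μ - ∫ y, g y ∂μ)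
      = ∫ y, B.indicator (fun y => f y * log c - (c - 1) * g y) y + (f y - g y) ∂μ := by
        rw [integral_add (hin.integrable_indicator hB) hsub, integral_indicator hB,
          integral_sub (hf.integrableOn.mul_const _) (hg.integrableOn.const_mul _),
          integral_mul_const, integral_const_mul, integral_sub hf hg]
    _ ≤ ∫ y, f y * log (f y / g y) ∂μ := by
        refine integral_mono ((hin.integrable_indicator hB).add hsub)
          (integrable_mul_log_div hf hg hf0 hg0 hfg) fun y => ?_
        by_cases hy : y ∈ B
        · have := mul_log_add_sub_le_mul_log_div (hf0 y) (hg0 y) hc (hpos y)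
          simp only [Set.indicator_of_mem hy]
          linarith
        · have := mul_log_add_sub_le_mul_log_div (hf0 y) (hg0 y) one_pos (hpos y)
          simp only [Set.indicator_of_notMem hy, log_one, mul_zero, one_mul, zero_add] at this ⊢
          exact this

theorem sum_setIntegral_le_integral {ι : Type*} [Fintype ι] {s : ι → Set α}
    (hs : ∀ i, MeasurableSet (s i)) (hd : Pairwise (Function.onFun Disjoint s))
    (hf : Integrable f μ) (hf0 : 0 ≤ᵐ[μ] f) :
    ∑ i, ∫ y in s i, f y ∂μ ≤ ∫ y, f y ∂μ := by
  rw [← integral_iUnion_fintype hs hd fun i => hf.integrableOn]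
  exact setIntegral_le_integral hf hf0

theorem integral_uniform_mixture {n : ℕ} {f : Fin n → α → ℝ}
    (hf : ∀ i, Integrable (f i) μ) (h1 : ∀ i, ∫ y, f i y ∂μ = 1) (hn : n ≠ 0) :
    ∫ y, (1 / n : ℝ) * ∑ j, f j y ∂μ = 1 := by
  rw [integral_const_mul, integral_finsetSum _ fun j _ => hf j]
  simp [h1, hn]

end

theorem mutual_info_lower_bound_from_decoding_general {X : Type*} {M : ℕ} (n : ℕ) (hn : 1 ≤ n)
    (p : X → (Fin M → ℂ) → ℝ)
    (hp0 : ∀ x y, 0 ≤ p x y)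
    (hp1 : ∀ x, ∫ y : Fin M → ℂ, p x y = 1)
    (lam : ℝ)
    (x : Fin n → X)
    (B : Fin n → Set (Fin M → ℂ))
    (hmeas : ∀ i, MeasurableSet (B i))
    (hdisj : Pairwise (Function.onFun Disjoint B))
    (hlow : ∀ i, lam ≤ ∫ y in B i, p (x i) y) :
    lam * Real.log n - 1 ≤
      (1 / n : ℝ) * ∑ i, ∫ y : Fin M → ℂ, p (x i) y *
        Real.log (p (x i) y / ((1 / n : ℝ) * ∑ j, p (x j) y)) := by
  have hnR : (1 : ℝ) ≤ n := by exact_mod_cast hn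
  have hpint : ∀ x, Integrable (p x) := fun x => .of_integral_ne_zero (by simp [hp1])
  set F : (Fin M → ℂ) → ℝ := fun y => (1 / n : ℝ) * ∑ j, p (x j) y
  have hFint : Integrable F := (integrable_finsetSum _ fun j _ => hpint (x j)).const_mul _
  have hF0 : ∀ y, 0 ≤ F y := fun y =>
    mul_nonneg (by positivity) (Finset.sum_nonneg fun j _ => hp0 _ _)
  have hF1 : ∫ y, F y = 1 :=
    integral_uniform_mixture (fun j => hpint (x j)) (fun j => hp1 (x j)) (by omega)
  have hper : ∀ i, lam * log n - (n - 1) * ∫ y in B i, F y ≤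
      ∫ y, p (x i) y * log (p (x i) y / F y) := fun i => by
    have := setIntegral_mul_log_sub_le_integral_mul_log_div (hpint (x i)) hFint (hp0 (x i)) hF0
      (by positivity) (fun y => le_mul_one_div_mul_sum (fun j => hp0 (x j) y) i) (hmeas i)
    rw [hp1, hF1, sub_self, add_zero] at this
    nlinarith [mul_le_mul_of_nonneg_right (hlow i) (log_nonneg hnR)]
  have hsum := sum_setIntegral_le_integral hmeas hdisj hFint (.of_forall hF0)
  rw [hF1] at hsum
  calc lam * log n - 1 ≤ (1 / n) * ∑ i, (lam * log n - (n - 1) * ∫ y in B i, F y) := by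
        rw [Finset.sum_sub_distrib, Finset.sum_const, Finset.card_univ, Fintype.card_fin,
          nsmul_eq_mul, ← Finset.mul_sum]
        field_simp
        nlinarith
    _ ≤ _ := by gcongr with i; exact hper i

/-- If there are `n` distinct inputs and pairwise disjoint decoding sets, each with success
probability at least `λ`, then the mutual information of the uniform input measure
satisfies `I(μₙ; W) ≥ λ·log n − 1` (Fano's inequality with block length 1). -/
theorem mutual_info_lower_bound_from_decoding {X : Type*} {M : ℕ} (n : ℕ) (hn : 1 ≤ n)
    (p : X → (Fin M → ℂ) → ℝ)
    (hp0 : ∀ x y, 0 ≤ p x y)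
    (hp1 : ∀ x, ∫ y : Fin M → ℂ, p x y = 1)
    (lam : ℝ) (hlam : 0 < lam)
    (x : Fin n → X) (hx : Function.Injective x)
    (B : Fin n → Set (Fin M → ℂ))
    (hmeas : ∀ i, MeasurableSet (B i))
    (hdisj : Pairwise (Function.onFun Disjoint B))
    (hlow : ∀ i, lam ≤ ∫ y in B i, p (x i) y) :
    lam * Real.log n - 1 ≤
      (1 / n : ℝ) * ∑ i, ∫ y : Fin M → ℂ, p (x i) y *
        Real.log (p (x i) y / ((1 / n : ℝ) * ∑ j, p (x j) y)) :=
  mutual_info_lower_bound_from_decoding_general n hn p hp0 hp1 lam x B hmeas hdisj hlow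
end

section
/- Let Σ be Hermitian positive definite with smallest eigenvalue λ_min > 0 and σ² > 0. Then det(σ²𝟙_M + (𝟙_M⊗xᴴ)Σ(𝟙_M⊗x)) ≥ (σ² + λ_min·‖x‖²)^M for all x ∈ ℂ^N, and consequently log det(σ²𝟙_M + (𝟙_M⊗xᴴ)Σ(𝟙_M⊗x)) → ∞ as ‖x‖ → ∞. -/
open Matrix MeasureTheory Filter
open scoped Kronecker ComplexOrder

/-!
With `A = 1_M ⊗ x` one has `Aᴴ A = ‖x‖² • 1`, so `λ_min • 1 ≤ Σ` in the Loewner order gives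
`λ_min ‖x‖² • 1 ≤ Aᴴ Σ A` and hence `(σ² + λ_min ‖x‖²) • 1 ≤ C(x)`. Every eigenvalue of `C(x)` is
then at least `σ² + λ_min ‖x‖² ≥ 0`, so their product `det C(x)` is at least its `M`-th power,
which is unbounded in `‖x‖`.
-/

open scoped MatrixOrder

namespace Matrix

variable {l m n 𝕜 : Type*} [Fintype m] [Fintype n] [DecidableEq n] [RCLike 𝕜]

theorem IsHermitian.algebraMap_le_iff_le_eigenvalues {A : Matrix n n 𝕜} (hA : A.IsHermitian)
    {c : ℝ} : algebraMap ℝ (Matrix n n 𝕜) c ≤ A ↔ ∀ i, c ≤ hA.eigenvalues i := by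
  rw [algebraMap_le_iff_le_spectrum (ha := hA.isSelfAdjoint),
    hA.spectrum_real_eq_range_eigenvalues]
  simp

theorem pow_card_le_re_det_of_algebraMap_le {A : Matrix n n 𝕜} {c : ℝ} (hc : 0 ≤ c)
    (h : algebraMap ℝ (Matrix n n 𝕜) c ≤ A) : c ^ Fintype.card n ≤ RCLike.re A.det := by
  have hA : A.IsHermitian := ((algebraMap_nonneg _ hc).trans h).posSemidef.isHermitian
  rw [hA.det_eq_prod_eigenvalues, ← RCLike.ofReal_prod, RCLike.ofReal_re, ← Finset.card_univ,
    ← Finset.prod_const]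
  exact Finset.prod_le_prod (fun _ _ => hc) fun i _ => hA.algebraMap_le_iff_le_eigenvalues.mp h i

theorem algebraMap_mul_le_conjTranspose_mul_mul [DecidableEq m] {S : Matrix m m 𝕜}
    {B : Matrix m n 𝕜} {c r : ℝ} (hS : algebraMap ℝ (Matrix m m 𝕜) c ≤ S)
    (hB : Bᴴ * B = algebraMap ℝ _ r) : algebraMap ℝ (Matrix n n 𝕜) (c * r) ≤ Bᴴ * S * B := by
  have key : Bᴴ * S * B - algebraMap ℝ _ (c * r) = Bᴴ * (S - algebraMap ℝ _ c) * B := by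
    simp only [Algebra.algebraMap_eq_smul_one] at hB ⊢
    rw [Matrix.mul_sub, Matrix.sub_mul, Matrix.mul_smul, Matrix.smul_mul, Matrix.mul_one, hB,
      smul_smul]
  exact le_iff.mpr (key ▸ (le_iff.mp hS).conjTranspose_mul_mul_same B)

theorem one_kronecker_conjTranspose_mul_self [Fintype l] [DecidableEq l] {B : Matrix m n 𝕜}
    {r : ℝ} (hB : Bᴴ * B = algebraMap ℝ _ r) :
    ((1 : Matrix l l 𝕜) ⊗ₖ B)ᴴ * ((1 : Matrix l l 𝕜) ⊗ₖ B) = algebraMap ℝ _ r := by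
  rw [conjTranspose_kronecker, ← mul_kronecker_mul, hB, conjTranspose_one, mul_one,
    Algebra.algebraMap_eq_smul_one, kronecker_smul, one_kronecker_one,
    Algebra.algebraMap_eq_smul_one]

end Matrix

theorem nsq_nonneg {ι : Type*} [Fintype ι] (v : ι → ℂ) : 0 ≤ nsq v :=
  Finset.sum_nonneg fun i _ => Complex.normSq_nonneg (v i)

theorem colMat_conjTranspose_mul_self {N : ℕ} (v : Fin N → ℂ) :
    (colMat v)ᴴ * colMat v = algebraMap ℝ _ (nsq v) := by
  ext i j
  rw [Subsingleton.elim i j, Algebra.algebraMap_eq_smul_one]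
  simp [mul_apply, colMat, nsq, Complex.normSq_eq_conj_mul_self]

theorem algebraMap_le_Cmat {M N : ℕ} {σ2 c : ℝ} {S : Matrix (Fin M × Fin N) (Fin M × Fin N) ℂ}
    (hS : algebraMap ℝ _ c ≤ S) (v : Fin N → ℂ) :
    algebraMap ℝ _ (σ2 + c * nsq v) ≤ Cmat M N σ2 S v := by
  have hconj : (1 : Matrix (Fin M) (Fin M) ℂ) ⊗ₖ (colMat v)ᴴ = (1 ⊗ₖ colMat v)ᴴ := by
    rw [conjTranspose_kronecker, conjTranspose_one]
  rw [Cmat, hconj, map_add, Algebra.algebraMap_eq_smul_one σ2, ← Complex.coe_smul, le_iff,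
    add_sub_add_left_eq_sub, ← le_iff]
  exact algebraMap_mul_le_conjTranspose_mul_mul hS
    (one_kronecker_conjTranspose_mul_self (colMat_conjTranspose_mul_self v))

/-- `det(σ²1_M + (1_M⊗xᴴ)Σ(1_M⊗x)) ≥ (σ² + λ_min‖x‖²)^M`, hence
`log det(σ²1_M + (1_M⊗xᴴ)Σ(1_M⊗x)) → ∞` as `‖x‖ → ∞`. -/
theorem det_covariance_lower_bound {M N : ℕ} (hM : 1 ≤ M) (σ2 lmin : ℝ)
    (S : Matrix (Fin M × Fin N) (Fin M × Fin N) ℂ) (hS : S.PosDef)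
    (hmin : ∀ i, lmin ≤ hS.1.eigenvalues i)
    (hlmin : 0 < lmin) (hσ : 0 < σ2) :
    (∀ v : Fin N → ℂ, (σ2 + lmin * nsq v) ^ M ≤ ((Cmat M N σ2 S v).det).re) ∧
    ∀ b : ℝ, ∃ R : ℝ, ∀ v : Fin N → ℂ, R ≤ nsq v →
      b ≤ Real.log (((Cmat M N σ2 S v).det).re) := by
  have hbound (v : Fin N → ℂ) : (σ2 + lmin * nsq v) ^ M ≤ ((Cmat M N σ2 S v).det).re := by
    have hpos : 0 ≤ σ2 + lmin * nsq v := by have := nsq_nonneg v; positivity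
    simpa using Matrix.pow_card_le_re_det_of_algebraMap_le hpos
      (algebraMap_le_Cmat (hS.1.algebraMap_le_iff_le_eigenvalues.mpr hmin) v)
  refine ⟨hbound, fun b => ⟨(max 1 (Real.exp b) - σ2) / lmin, fun v hv => ?_⟩⟩
  have hbase : max 1 (Real.exp b) ≤ σ2 + lmin * nsq v := by
    rw [div_le_iff₀ hlmin] at hv
    linarith
  have hone : 1 ≤ σ2 + lmin * nsq v := le_of_max_le_left hbase
  calc b = Real.log (Real.exp b) := (Real.log_exp b).symm
    _ ≤ Real.log (σ2 + lmin * nsq v) :=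
      Real.log_le_log (Real.exp_pos b) (le_of_max_le_right hbase)
    _ ≤ Real.log ((σ2 + lmin * nsq v) ^ M) :=
      Real.log_le_log (by positivity) (le_self_pow₀ hone (by omega))
    _ ≤ Real.log ((Cmat M N σ2 S v).det).re :=
      Real.log_le_log (by positivity) (hbound v)
end
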